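/- arXiv:1702.07251 — 2 statements merged into one kernel-verified Lean document; each statement's English description precedes it below -/
import Mathlib

section
/- Let 𝐌=(M_1,…,M_k) be a positively irreducible tuple of nonnegative d×d matrices. There exists a constant C>0 such that for every nonempty word J with M_J≠0, there exist words I_1 and I_2 such that (M_{I_1JI_2})_{1,1} > 0 and C⁻¹‖M_J‖ ≤ ‖M_{I_1JI_2}‖ ≤ C‖M_J‖, where I_1JI_2 denotes the concatenation of I_1, J and I_2. -/
open Filter Real MeasureTheory

/-- The matrix norm `‖A‖ = ∑_{i,j} |A i j|`. -/
noncomputable def mnorm {d : ℕ} (A : Matrix (Fin d) (Fin d) ℝ) : ℝ :=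
  ∑ i, ∑ j, |A i j|

/-- The product `M_{j₁} ⋯ M_{jₙ}` along a word `w = j₁⋯jₙ`. -/
noncomputable def wordProd {d k : ℕ} (M : Fin k → Matrix (Fin d) (Fin d) ℝ)
    (w : List (Fin k)) : Matrix (Fin d) (Fin d) ℝ :=
  (w.map M).prod

/-- `𝐌` has a uniform Lyapunov exponent modulo 0. -/
def HasULE {d k : ℕ} (M : Fin k → Matrix (Fin d) (Fin d) ℝ) : Prop :=
  ∃ C : ℝ, 0 < C ∧ ∃ lam : ℝ, ∀ w : List (Fin k), w ≠ [] →
    wordProd M w = 0 ∨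
      (C⁻¹ * Real.exp (lam * w.length) ≤ mnorm (wordProd M w) ∧
        mnorm (wordProd M w) ≤ C * Real.exp (lam * w.length))

/-- `𝐌` is irreducible: no nonzero proper subspace is invariant under all `M i`. -/
def MatIrred {d k : ℕ} (M : Fin k → Matrix (Fin d) (Fin d) ℝ) : Prop :=
  ∀ V : Submodule ℝ (Fin d → ℝ),
    (∀ i, ∀ v ∈ V, (M i).mulVec v ∈ V) → V = ⊥ ∨ V = ⊤

/-- `𝐌` is positively irreducible. -/
def PosIrred {d k : ℕ} (M : Fin k → Matrix (Fin d) (Fin d) ℝ) : Prop :=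
  (∀ i a b, 0 ≤ M i a b) ∧
    ∃ ℓ : ℕ, 1 ≤ ℓ ∧ ∀ a b, 0 < (∑ j ∈ Finset.Icc 1 ℓ, (∑ i, M i) ^ j) a b

/-- A single nonnegative matrix is positively irreducible:
some partial sum of its powers is entrywise positive. -/
def PosIrredMat {n : ℕ} (A : Matrix (Fin n) (Fin n) ℝ) : Prop :=
  ∃ ℓ : ℕ, 1 ≤ ℓ ∧ ∀ a b, 0 < (∑ j ∈ Finset.Icc 1 ℓ, A ^ j) a b

-- auxiliary lemmas

lemma wordProd_nil {d k : ℕ} (M : Fin k → Matrix (Fin d) (Fin d) ℝ) :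
    wordProd M [] = 1 := by simp [wordProd]

lemma wordProd_cons {d k : ℕ} (M : Fin k → Matrix (Fin d) (Fin d) ℝ) (i : Fin k)
    (w : List (Fin k)) : wordProd M (i :: w) = M i * wordProd M w := by
  simp [wordProd]

lemma wordProd_append {d k : ℕ} (M : Fin k → Matrix (Fin d) (Fin d) ℝ)
    (w₁ w₂ : List (Fin k)) :
    wordProd M (w₁ ++ w₂) = wordProd M w₁ * wordProd M w₂ := by
  simp [wordProd]

lemma wordProd_nonneg {d k : ℕ} {M : Fin k → Matrix (Fin d) (Fin d) ℝ}
    (hM : ∀ i a b, 0 ≤ M i a b) (w : List (Fin k)) (a b : Fin d) :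
    0 ≤ wordProd M w a b := by
  induction w generalizing a b with
  | nil => rw [wordProd_nil]; simp [Matrix.one_apply]; positivity
  | cons i t ih =>
      rw [wordProd_cons, Matrix.mul_apply]
      exact Finset.sum_nonneg fun c _ => mul_nonneg (hM i a c) (ih c b)

lemma mnorm_nonneg {d : ℕ} (A : Matrix (Fin d) (Fin d) ℝ) : 0 ≤ mnorm A := by
  apply Finset.sum_nonneg; intro i _; apply Finset.sum_nonneg; intro j _; positivity

lemma entry_le_mnorm {d : ℕ} (A : Matrix (Fin d) (Fin d) ℝ) (a b : Fin d) :
    A a b ≤ mnorm A := by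
  calc A a b ≤ |A a b| := le_abs_self _
  _ ≤ ∑ j, |A a j| := Finset.single_le_sum (f := fun j => |A a j|)
      (fun j _ => abs_nonneg _) (Finset.mem_univ b)
  _ ≤ mnorm A := Finset.single_le_sum (f := fun i => ∑ j, |A i j|)
      (fun i _ => Finset.sum_nonneg fun j _ => abs_nonneg _) (Finset.mem_univ a)

lemma mnorm_mul_le {d : ℕ} (A B : Matrix (Fin d) (Fin d) ℝ) :
    mnorm (A * B) ≤ mnorm A * mnorm B := by
  unfold mnorm
  calc ∑ i, ∑ j, |(A * B) i j|
      ≤ ∑ i, ∑ j, ∑ c, |A i c| * |B c j| := by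
        apply Finset.sum_le_sum; intro i _; apply Finset.sum_le_sum; intro j _
        rw [Matrix.mul_apply]
        calc |∑ c, A i c * B c j| ≤ ∑ c, |A i c * B c j| := Finset.abs_sum_le_sum_abs _ _
        _ = ∑ c, |A i c| * |B c j| := by simp [abs_mul]
  _ = ∑ i, ∑ c, |A i c| * ∑ j, |B c j| := by
        congr 1; ext i; rw [Finset.sum_comm]; congr 1; ext c; rw [Finset.mul_sum]
  _ ≤ ∑ i, ∑ c, |A i c| * (∑ c', ∑ j, |B c' j|) := by
        apply Finset.sum_le_sum; intro i _; apply Finset.sum_le_sum; intro c _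
        apply mul_le_mul_of_nonneg_left _ (abs_nonneg _)
        exact Finset.single_le_sum (f := fun c => ∑ j, |B c j|)
          (fun c _ => Finset.sum_nonneg fun j _ => abs_nonneg _) (Finset.mem_univ c)
  _ = (∑ i, ∑ c, |A i c|) * (∑ c', ∑ j, |B c' j|) := by
        rw [Finset.sum_mul]; congr 1; ext i; rw [Finset.sum_mul]

lemma mul_entry_ge {d : ℕ} {A B : Matrix (Fin d) (Fin d) ℝ}
    (hA : ∀ a b, 0 ≤ A a b) (hB : ∀ a b, 0 ≤ B a b) (a c b : Fin d) :
    A a c * B c b ≤ (A * B) a b := by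
  rw [Matrix.mul_apply]
  exact Finset.single_le_sum (f := fun c => A a c * B c b)
    (fun c _ => mul_nonneg (hA a c) (hB c b)) (Finset.mem_univ c)

lemma sumM_nonneg {d k : ℕ} {M : Fin k → Matrix (Fin d) (Fin d) ℝ}
    (hM : ∀ i a b, 0 ≤ M i a b) (a b : Fin d) : 0 ≤ (∑ i, M i) a b := by
  simp only [Matrix.sum_apply]
  exact Finset.sum_nonneg fun i _ => hM i a b

lemma sumM_pow_nonneg {d k : ℕ} {M : Fin k → Matrix (Fin d) (Fin d) ℝ}
    (hM : ∀ i a b, 0 ≤ M i a b) (n : ℕ) (a b : Fin d) :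
    0 ≤ ((∑ i, M i) ^ n) a b := by
  induction n generalizing a b with
  | zero => simp [Matrix.one_apply]; positivity
  | succ m ihm =>
      rw [pow_succ, Matrix.mul_apply]
      exact Finset.sum_nonneg fun e _ =>
        mul_nonneg (ihm a e) (sumM_nonneg hM e b)

lemma pow_entry_word {d k : ℕ} {M : Fin k → Matrix (Fin d) (Fin d) ℝ}
    (hM : ∀ i a b, 0 ≤ M i a b) (j : ℕ) (a b : Fin d)
    (h : 0 < ((∑ i, M i) ^ j) a b) : ∃ u : List (Fin k), 0 < wordProd M u a b := by
  induction j generalizing a b with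
  | zero => exact ⟨[], by simpa [wordProd_nil] using h⟩
  | succ n ih =>
      rw [pow_succ, Matrix.mul_apply] at h
      obtain ⟨c, -, hc⟩ := Finset.exists_lt_of_sum_lt
        (show ∑ _c : Fin d, (0:ℝ) < _ by simpa using h)
      have hac : 0 < ((∑ i, M i) ^ n) a c := by
        rcases (sumM_pow_nonneg hM n a c).lt_or_eq with h' | h'
        · exact h'
        · rw [← h'] at hc; rw [zero_mul] at hc; exact absurd hc (lt_irrefl 0)
      have hcb : 0 < (∑ i, M i) c b := by
        rcases (sumM_nonneg hM c b).lt_or_eq with h' | h'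
        · exact h'
        · rw [← h', mul_zero] at hc; exact absurd hc (lt_irrefl 0)
      obtain ⟨u, hu⟩ := ih a c hac
      have : (0:ℝ) < ∑ i, M i c b := by simpa [Matrix.sum_apply] using hcb
      obtain ⟨i, -, hi⟩ := Finset.exists_lt_of_sum_lt
        (show ∑ _i : Fin k, (0:ℝ) < _ by simpa using this)
      refine ⟨u ++ [i], ?_⟩
      rw [wordProd_append]
      have hsingle : wordProd M [i] = M i := by simp [wordProd]
      calc (0:ℝ) < wordProd M u a c * wordProd M [i] c b := by
            rw [hsingle]; exact mul_pos hu hi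
      _ ≤ _ := mul_entry_ge (wordProd_nonneg hM u)
            (wordProd_nonneg hM [i]) a c b

theorem stmt6 {d k : ℕ} [NeZero d] [NeZero k]
    (M : Fin k → Matrix (Fin d) (Fin d) ℝ)
    (hpos : PosIrred M) :
    ∃ C : ℝ, 0 < C ∧ ∀ w : List (Fin k), w ≠ [] → wordProd M w ≠ 0 →
      ∃ I₁ I₂ : List (Fin k),
        0 < wordProd M (I₁ ++ w ++ I₂) 0 0 ∧
        C⁻¹ * mnorm (wordProd M w) ≤ mnorm (wordProd M (I₁ ++ w ++ I₂)) ∧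
        mnorm (wordProd M (I₁ ++ w ++ I₂)) ≤ C * mnorm (wordProd M w) := by
  obtain ⟨hM, ℓ, -, hℓ⟩ := hpos
  have hconn : ∀ a b : Fin d, ∃ u : List (Fin k), 0 < wordProd M u a b := by
    intro a b
    have h := hℓ a b
    rw [Matrix.sum_apply] at h
    obtain ⟨j, -, hj⟩ := Finset.exists_lt_of_sum_lt
      (show ∑ _j ∈ Finset.Icc 1 ℓ, (0:ℝ) < _ by simpa using h)
    exact pow_entry_word hM j a b hj
  choose u hu using hconn
  have hne : (Finset.univ : Finset (Fin d × Fin d)).Nonempty := Finset.univ_nonempty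
  set ε := Finset.univ.inf' hne
    (fun p : Fin d × Fin d => wordProd M (u p.1 p.2) p.1 p.2) with hεdef
  have hεpos : 0 < ε := (Finset.lt_inf'_iff hne).2 fun p _ => hu p.1 p.2
  set K := Finset.univ.sup' hne
    (fun p : Fin d × Fin d => mnorm (wordProd M (u p.1 p.2))) with hKdef
  have hKle : ∀ a b : Fin d, mnorm (wordProd M (u a b)) ≤ K := fun a b =>
    Finset.le_sup' (f := fun p : Fin d × Fin d => mnorm (wordProd M (u p.1 p.2)))
      (Finset.mem_univ (a, b))
  have hd : 0 < (d:ℝ) := by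
    have := NeZero.pos d; exact_mod_cast this
  have hK0 : 0 ≤ K := le_trans (mnorm_nonneg _) (hKle 0 0)
  refine ⟨(d:ℝ)^2 / ε^2 + K^2 + 1, by positivity, ?_⟩
  intro w _ hw0
  obtain ⟨p, -, hp⟩ := Finset.exists_max_image (Finset.univ : Finset (Fin d × Fin d))
    (fun p => wordProd M w p.1 p.2) hne
  obtain ⟨a, b⟩ := p
  simp only at hp
  have hexnz : ∃ a' b', wordProd M w a' b' ≠ 0 := by
    by_contra h
    push_neg at h
    exact hw0 (Matrix.ext fun a' b' => h a' b')
  obtain ⟨a', b', hnz⟩ := hexnz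
  have hab : 0 < wordProd M w a b :=
    lt_of_lt_of_le (lt_of_le_of_ne (wordProd_nonneg hM w a' b') (Ne.symm hnz))
      (hp (a', b') (Finset.mem_univ _))
  have hmax : mnorm (wordProd M w) ≤ (d:ℝ)^2 * wordProd M w a b := by
    calc mnorm (wordProd M w) ≤ ∑ _i : Fin d, ∑ _j : Fin d, wordProd M w a b := by
          apply Finset.sum_le_sum; intro i _
          apply Finset.sum_le_sum; intro j _
          rw [abs_of_nonneg (wordProd_nonneg hM w i j)]
          exact hp (i, j) (Finset.mem_univ _)
    _ = (d:ℝ)^2 * wordProd M w a b := by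
          simp [Finset.sum_const, Finset.card_univ, nsmul_eq_mul]; ring
  refine ⟨u 0 a, u b 0, ?_, ?_, ?_⟩
  all_goals
    rw [wordProd_append, wordProd_append]
  · calc (0:ℝ) < (wordProd M (u 0 a) 0 a * wordProd M w a b) * wordProd M (u b 0) b 0 :=
          mul_pos (mul_pos (hu 0 a) hab) (hu b 0)
    _ ≤ (wordProd M (u 0 a) * wordProd M w) 0 b * wordProd M (u b 0) b 0 := by
          apply mul_le_mul_of_nonneg_right _ (wordProd_nonneg hM _ b 0)
          exact mul_entry_ge (wordProd_nonneg hM _) (wordProd_nonneg hM _) 0 a b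
    _ ≤ _ := mul_entry_ge
          (fun x y => by
            rw [Matrix.mul_apply]
            exact Finset.sum_nonneg fun c _ =>
              mul_nonneg (wordProd_nonneg hM _ x c) (wordProd_nonneg hM _ c y))
          (wordProd_nonneg hM _) 0 b 0
  · -- lower bound
    have hεa : ε ≤ wordProd M (u 0 a) 0 a :=
      Finset.inf'_le (f := fun p : Fin d × Fin d => wordProd M (u p.1 p.2) p.1 p.2)
        (Finset.mem_univ ((0 : Fin d), a))
    have hεb : ε ≤ wordProd M (u b 0) b 0 :=
      Finset.inf'_le (f := fun p : Fin d × Fin d => wordProd M (u p.1 p.2) p.1 p.2)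
        (Finset.mem_univ (b, (0 : Fin d)))
    have hPW : (ε * wordProd M w a b) * ε ≤
        ((wordProd M (u 0 a) * wordProd M w) * wordProd M (u b 0)) 0 0 := by
      have hstep : ε * wordProd M w a b ≤ (wordProd M (u 0 a) * wordProd M w) 0 b :=
        le_trans (mul_le_mul_of_nonneg_right hεa hab.le)
          (mul_entry_ge (wordProd_nonneg hM _) (wordProd_nonneg hM _) 0 a b)
      calc (ε * wordProd M w a b) * ε
          ≤ (wordProd M (u 0 a) * wordProd M w) 0 b * wordProd M (u b 0) b 0 := by
            apply mul_le_mul hstep hεb hεpos.le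
            exact le_trans (mul_nonneg hεpos.le hab.le) hstep
      _ ≤ _ := mul_entry_ge
          (fun x y => by
            rw [Matrix.mul_apply]
            exact Finset.sum_nonneg fun c _ =>
              mul_nonneg (wordProd_nonneg hM _ x c) (wordProd_nonneg hM _ c y))
          (wordProd_nonneg hM _) 0 b 0
    have hentry : ((wordProd M (u 0 a) * wordProd M w) * wordProd M (u b 0)) 0 0 ≤
        mnorm ((wordProd M (u 0 a) * wordProd M w) * wordProd M (u b 0)) :=
      entry_le_mnorm _ 0 0
    set C := (d:ℝ)^2 / ε^2 + K^2 + 1 with hC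
    have hCinv : C⁻¹ ≤ ε^2 / (d:ℝ)^2 := by
      rw [inv_le_iff_one_le_mul₀ (by positivity)]
      rw [hC]
      rw [div_mul_eq_mul_div, le_div_iff₀ (by positivity)]
      have key : ε^2 * ((d:ℝ)^2 / ε^2) = (d:ℝ)^2 := by field_simp
      nlinarith [sq_nonneg K, sq_nonneg ε, hεpos, hd, key]
    calc C⁻¹ * mnorm (wordProd M w) ≤ (ε^2 / (d:ℝ)^2) * mnorm (wordProd M w) :=
          mul_le_mul_of_nonneg_right hCinv (mnorm_nonneg _)
    _ ≤ (ε^2 / (d:ℝ)^2) * ((d:ℝ)^2 * wordProd M w a b) :=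
          mul_le_mul_of_nonneg_left hmax (by positivity)
    _ = (ε * wordProd M w a b) * ε := by field_simp
    _ ≤ _ := le_trans hPW hentry
  · -- upper bound
    calc mnorm ((wordProd M (u 0 a) * wordProd M w) * wordProd M (u b 0))
        ≤ mnorm (wordProd M (u 0 a) * wordProd M w) * mnorm (wordProd M (u b 0)) :=
          mnorm_mul_le _ _
    _ ≤ (mnorm (wordProd M (u 0 a)) * mnorm (wordProd M w)) * mnorm (wordProd M (u b 0)) :=
          mul_le_mul_of_nonneg_right (mnorm_mul_le _ _) (mnorm_nonneg _)
    _ ≤ (K * mnorm (wordProd M w)) * K := by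
          apply mul_le_mul _ (hKle b 0) (mnorm_nonneg _)
          · exact mul_nonneg hK0 (mnorm_nonneg _)
          · exact mul_le_mul_of_nonneg_right (hKle 0 a) (mnorm_nonneg _)
    _ ≤ ((d:ℝ)^2 / ε^2 + K^2 + 1) * mnorm (wordProd M w) := by
          have h1 : (0:ℝ) ≤ (d:ℝ)^2 / ε^2 + 1 := by positivity
          nlinarith [mnorm_nonneg (wordProd M w)]
end

section
/- Let 𝐌=(M_1,…,M_k) be a positively irreducible tuple of nonnegative d×d matrices. Then: (a) for every nonempty word J=j_1⋯j_n with M_J≠0, there exists an infinite sequence (x_t)_{t≥1}∈{1,…,k}^ℕ with x_1⋯x_n = J such that M_{x_1}⋯M_{x_m} ≠ 0 for every m≥1 (so the admissible words of the subshift Y_𝐌 of length n are exactly the words J with M_J≠0); and (b) for any two nonempty words I, J with M_I≠0 and M_J≠0, there exists a word K such that M_{IKJ} ≠ 0, where IKJ denotes concatenation. -/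
open Filter Real MeasureTheory

section AuxLemmas
variable {d k : ℕ}

lemma wp_append (M : Fin k → Matrix (Fin d) (Fin d) ℝ) (a b : List (Fin k)) :
    wordProd M (a ++ b) = wordProd M a * wordProd M b := by
  simp [wordProd, List.map_append]

lemma wp_cons (M : Fin k → Matrix (Fin d) (Fin d) ℝ) (i : Fin k) (t : List (Fin k)) :
    wordProd M (i :: t) = M i * wordProd M t := by
  simp [wordProd]

lemma mul_entry_nonneg' {A B : Matrix (Fin d) (Fin d) ℝ}
    (hA : ∀ a b, 0 ≤ A a b) (hB : ∀ a b, 0 ≤ B a b) : ∀ a c, 0 ≤ (A * B) a c := by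
  intro a c
  rw [Matrix.mul_apply]
  exact Finset.sum_nonneg fun b _ => mul_nonneg (hA a b) (hB b c)

lemma mul_entry_pos' {A B : Matrix (Fin d) (Fin d) ℝ}
    (hA : ∀ a b, 0 ≤ A a b) (hB : ∀ a b, 0 ≤ B a b) {a b c}
    (h1 : 0 < A a b) (h2 : 0 < B b c) : 0 < (A * B) a c := by
  rw [Matrix.mul_apply]
  exact lt_of_lt_of_le (mul_pos h1 h2)
    (Finset.single_le_sum (fun x _ => mul_nonneg (hA a x) (hB x c)) (Finset.mem_univ b))

lemma exists_pos_of_sum_pos' {ι : Type*} {s : Finset ι} {f : ι → ℝ}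
    (h : 0 < ∑ x ∈ s, f x) : ∃ x ∈ s, 0 < f x := by
  by_contra hc
  push_neg at hc
  exact absurd (Finset.sum_nonpos hc) (not_le.mpr h)

lemma pos_of_mul_pos_nonneg {x y : ℝ} (hx : 0 ≤ x) (hy : 0 ≤ y) (h : 0 < x * y) :
    0 < x ∧ 0 < y := by
  constructor
  · rcases hx.lt_or_eq with h' | h'
    · exact h'
    · exfalso; rw [← h', zero_mul] at h; exact lt_irrefl _ h
  · rcases hy.lt_or_eq with h' | h'
    · exact h'
    · exfalso; rw [← h', mul_zero] at h; exact lt_irrefl _ h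

lemma wp_nonneg {M : Fin k → Matrix (Fin d) (Fin d) ℝ}
    (hM : ∀ i a b, 0 ≤ M i a b) : ∀ w : List (Fin k), ∀ a b, 0 ≤ wordProd M w a b := by
  intro w
  induction w with
  | nil =>
      intro a b
      simp only [wordProd, List.map_nil, List.prod_nil]
      rw [Matrix.one_apply]
      split <;> norm_num
  | cons i t ih =>
      rw [wp_cons]
      exact mul_entry_nonneg' (hM i) ih

lemma wp_ne_of_pos {M : Fin k → Matrix (Fin d) (Fin d) ℝ} {w : List (Fin k)} {a b : Fin d}
    (h : 0 < wordProd M w a b) : wordProd M w ≠ 0 := by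
  intro h0
  rw [h0] at h
  simp at h

lemma exists_pos_entry {A : Matrix (Fin d) (Fin d) ℝ}
    (h0 : A ≠ 0) (hA : ∀ a b, 0 ≤ A a b) : ∃ a b, 0 < A a b := by
  by_contra hc
  push_neg at hc
  apply h0
  ext a b
  exact le_antisymm (hc a b) (hA a b)

lemma pow_entry_nonneg' {A : Matrix (Fin d) (Fin d) ℝ}
    (hA : ∀ a b, 0 ≤ A a b) : ∀ n, ∀ a b, 0 ≤ (A ^ n) a b := by
  intro n
  induction n with
  | zero =>
      intro a b
      rw [pow_zero, Matrix.one_apply]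
      split <;> norm_num
  | succ n ih =>
      rw [pow_succ]
      exact mul_entry_nonneg' ih hA

lemma pow_word {M : Fin k → Matrix (Fin d) (Fin d) ℝ}
    (hM : ∀ i a b, 0 ≤ M i a b) :
    ∀ j : ℕ, 1 ≤ j → ∀ a b, 0 < ((∑ i, M i) ^ j) a b →
      ∃ w : List (Fin k), w ≠ [] ∧ 0 < wordProd M w a b := by
  have hS : ∀ a b, 0 ≤ (∑ i, M i) a b := by
    intro a b
    rw [Matrix.sum_apply]
    exact Finset.sum_nonneg fun i _ => hM i a b
  intro j
  induction j with
  | zero => omega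
  | succ n ih =>
      intro _ a b hab
      rcases Nat.eq_zero_or_pos n with hn | hn
      · subst hn
        rw [pow_one] at hab
        rw [Matrix.sum_apply] at hab
        obtain ⟨i, _, hi⟩ := exists_pos_of_sum_pos' hab
        refine ⟨[i], by simp, ?_⟩
        have : wordProd M [i] = M i := by simp [wordProd]
        rw [this]; exact hi
      · rw [pow_succ'] at hab
        rw [Matrix.mul_apply] at hab
        obtain ⟨c, _, hc⟩ := exists_pos_of_sum_pos' hab
        obtain ⟨h1, h2⟩ := pos_of_mul_pos_nonneg (hS a c) (pow_entry_nonneg' hS n c b) hc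
        obtain ⟨w', hw', hw'p⟩ := ih hn c b h2
        rw [Matrix.sum_apply] at h1
        obtain ⟨i, _, hi⟩ := exists_pos_of_sum_pos' h1
        refine ⟨i :: w', by simp, ?_⟩
        rw [wp_cons]
        exact mul_entry_pos' (hM i) (wp_nonneg hM w') hi hw'p

lemma connect {M : Fin k → Matrix (Fin d) (Fin d) ℝ} (hpos : PosIrred M) :
    ∀ a b : Fin d, ∃ w : List (Fin k), w ≠ [] ∧ 0 < wordProd M w a b := by
  obtain ⟨hM, ℓ, hℓ1, hℓ⟩ := hpos
  intro a b
  have := hℓ a b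
  rw [Matrix.sum_apply] at this
  obtain ⟨j, hj, hjp⟩ := exists_pos_of_sum_pos' this
  rw [Finset.mem_Icc] at hj
  exact pow_word hM j hj.1 a b hjp

end AuxLemmas

theorem stmt17 {d k : ℕ} [NeZero d] [NeZero k]
    (M : Fin k → Matrix (Fin d) (Fin d) ℝ)
    (hpos : PosIrred M) :
    (∀ w : List (Fin k), w ≠ [] → wordProd M w ≠ 0 →
      ∃ x : ℕ → Fin k, List.ofFn (fun i : Fin w.length => x i) = w ∧
        ∀ mm : ℕ, 1 ≤ mm → wordProd M (List.ofFn fun i : Fin mm => x i) ≠ 0) ∧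
    (∀ I J : List (Fin k), I ≠ [] → J ≠ [] → wordProd M I ≠ 0 → wordProd M J ≠ 0 →
      ∃ K : List (Fin k), wordProd M (I ++ K ++ J) ≠ 0) := by
  have hM := hpos.1
  -- one-step extension lemma
  have hstep : ∀ L : List (Fin k), wordProd M L ≠ 0 → ∃ i, wordProd M (L ++ [i]) ≠ 0 := by
    intro L hL
    obtain ⟨a, b, hab⟩ := exists_pos_entry hL (wp_nonneg hM L)
    obtain ⟨w, hw, hwp⟩ := connect hpos b b
    cases w with
    | nil => exact absurd rfl hw
    | cons i t =>
        rw [wp_cons, Matrix.mul_apply] at hwp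
        obtain ⟨c, _, hc⟩ := exists_pos_of_sum_pos' hwp
        have hic : 0 < M i b c :=
          (pos_of_mul_pos_nonneg (hM i b c) (wp_nonneg hM t c b) hc).1
        refine ⟨i, wp_ne_of_pos (a := a) (b := c) ?_⟩
        rw [wp_append]
        have h1 : wordProd M [i] = M i := by simp [wordProd]
        rw [h1]
        exact mul_entry_pos' (wp_nonneg hM L) (hM i) hab hic
  constructor
  · intro w hw hw0
    obtain ⟨F, hF0, hFstep⟩ : ∃ F : ℕ → {l : List (Fin k) // wordProd M l ≠ 0},
        (F 0).1 = w ∧ ∀ n, ∃ i, (F (n + 1)).1 = (F n).1 ++ [i] := by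
      refine ⟨fun n => Nat.rec ⟨w, hw0⟩
        (fun _ p => ⟨p.1 ++ [Classical.choose (hstep p.1 p.2)],
          Classical.choose_spec (hstep p.1 p.2)⟩) n, rfl, fun n => ⟨_, rfl⟩⟩
    have hlen : ∀ n, (F n).1.length = w.length + n := by
      intro n
      induction n with
      | zero => rw [hF0]; omega
      | succ n ih =>
          obtain ⟨i, hi⟩ := hFstep n
          rw [hi, List.length_append, ih]
          simp [Nat.add_assoc]
    have hpre : ∀ m n, m ≤ n → (F m).1 <+: (F n).1 := by
      intro m n h
      induction n, h using Nat.le_induction with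
      | base => exact List.prefix_refl _
      | succ n hmn ih =>
          obtain ⟨i, hi⟩ := hFstep n
          rw [hi]
          exact ih.trans (List.prefix_append _ _)
    have hk0 : 0 < k := Nat.pos_of_ne_zero (NeZero.ne k)
    have i0 : Fin k := ⟨0, hk0⟩
    have hagree : ∀ t N, t < (F N).1.length →
        ((F (t + 1)).1).getD t i0 = (F N).1.getD t i0 := by
      intro t N h
      have h1 : t < (F (t + 1)).1.length := by rw [hlen]; omega
      rw [List.getD_eq_getElem _ _ h, List.getD_eq_getElem _ _ h1]
      rcases le_total (t + 1) N with hle | hle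
      · exact (hpre _ _ hle).getElem h1
      · exact ((hpre _ _ hle).getElem h).symm
    have hofFn : ∀ m : ℕ,
        List.ofFn (fun i : Fin m => ((F (i.1 + 1)).1).getD i.1 i0) = (F m).1.take m := by
      intro m
      have hlm : m ≤ (F m).1.length := by rw [hlen]; omega
      apply List.ext_getElem
      · simp [hlen]
      · intro i h1 h2
        simp only [List.length_ofFn] at h1
        have hi' : i < (F m).1.length := by omega
        rw [List.getElem_ofFn, List.getElem_take]
        rw [hagree i m hi']
        exact List.getD_eq_getElem _ _ hi'
    refine ⟨fun t => ((F (t + 1)).1).getD t i0, ?_, ?_⟩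
    · rw [hofFn w.length]
      have hp : w <+: (F w.length).1 := hF0 ▸ hpre 0 w.length (Nat.zero_le _)
      exact (List.prefix_iff_eq_take.mp hp).symm
    · intro mm _
      rw [hofFn mm]
      intro h0
      apply (F mm).2
      conv_lhs => rw [← List.take_append_drop mm (F mm).1]
      rw [wp_append, h0, zero_mul]
  · intro I J _ _ hI0 hJ0
    obtain ⟨a, b, hab⟩ := exists_pos_entry hI0 (wp_nonneg hM I)
    obtain ⟨c, e, hce⟩ := exists_pos_entry hJ0 (wp_nonneg hM J)
    obtain ⟨K, _, hK⟩ := connect hpos b c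
    refine ⟨K, wp_ne_of_pos (a := a) (b := e) ?_⟩
    rw [wp_append, wp_append]
    exact mul_entry_pos' (mul_entry_nonneg' (wp_nonneg hM I) (wp_nonneg hM K))
      (wp_nonneg hM J)
      (mul_entry_pos' (wp_nonneg hM I) (wp_nonneg hM K) hab hK) hce
end
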